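/- arXiv:1711.09994 — 2 statements merged into one kernel-verified Lean document; each statement's English description precedes it below -/
import Mathlib

section
/- If $f_1, \dots, f_n$ are convex functions on $\mathbb{R}^d$ with common domain of finiteness $\Theta$ having nonempty interior, each differentiable on $\mathrm{int}(\Theta)$ and each steep (i.e., $\|\nabla f_j(x_i)\| \to \infty$ along any sequence $(x_i)$ in $\mathrm{int}(\Theta)$ converging to a boundary point of $\Theta$), then the average $\bar f = \frac{1}{n}\sum_{j=1}^n f_j$ is steep. -/
/-!
Fix `y` with `closedBall y ρ ⊆ interior Θ`; each `f j` is bounded above on this ball by some `M j`,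
as convex functions are continuous on the interior. Testing the gradient inequality of `f j` at `u`
against the point of the ball in the direction of `∇ (f j) u`, and at `y` against `u`, gives
`ρ ‖∇ (f j) u‖ ≤ M j - f j y + ⟪∇ (f j) u - ∇ (f j) y, u - y⟫`.
Summing over `j` and dropping all but one of the nonnegative terms on the left,
`ρ ‖∇ (f j₀) u‖ ≤ C + ‖∇ F u - ∇ F y‖ ‖u - y‖` for `F = ∑ j, f j`. Along a bounded sequence the
gradient of `F`, hence of the average, thus blows up as soon as that of a single `f j₀` does.
-/

open Filter Topology

/-- A convex function `f` with effective domain `Θ` is *steep* if along any sequence of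
points of `interior Θ` converging to a boundary point of `Θ`, the norm of the gradient
tends to infinity. -/
def Steep {d : ℕ} (Θ : Set (EuclideanSpace ℝ (Fin d))) (f : EuclideanSpace ℝ (Fin d) → ℝ) :
    Prop :=
  ∀ x ∈ frontier Θ, ∀ u : ℕ → EuclideanSpace ℝ (Fin d),
    (∀ i, u i ∈ interior Θ) → Tendsto u atTop (𝓝 x) →
      Tendsto (fun i => ‖gradient f (u i)‖) atTop atTop

open Metric
open scoped InnerProductSpace Gradient

theorem ConvexOn.fderiv_sub_le {E : Type*} [NormedAddCommGroup E] [NormedSpace ℝ E]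
    {s : Set E} {f : E → ℝ} {a z : E} (hf : ConvexOn ℝ s f) (ha : a ∈ s) (hz : z ∈ s)
    (hfa : DifferentiableAt ℝ f a) : fderiv ℝ f a (z - a) ≤ f z - f a := by
  let γ : ℝ →ᵃ[ℝ] E := AffineMap.lineMap a z
  have hγ : HasDerivAt (f ∘ γ) (fderiv ℝ f a (z - a)) 0 := by
    have hfa' : HasFDerivAt f (fderiv ℝ f a) (γ 0) := by
      simpa [γ] using hfa.hasFDerivAt
    exact hfa'.comp_hasDerivAt 0 AffineMap.hasDerivAt_lineMap
  simpa [slope, γ] using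
    (hf.comp_affineMap γ).le_slope_of_hasDerivAt (x := 0) (y := 1) (by simpa [γ])
      (by simpa [γ]) one_pos hγ

section InnerProductSpace

variable {E : Type*} [NormedAddCommGroup E] [InnerProductSpace ℝ E] [CompleteSpace E]

theorem ConvexOn.inner_gradient_sub_le {s : Set E} {f : E → ℝ} {a z : E}
    (hf : ConvexOn ℝ s f) (ha : a ∈ s) (hz : z ∈ s) (hfa : DifferentiableAt ℝ f a) :
    ⟪∇ f a, z - a⟫_ℝ ≤ f z - f a := by
  rw [inner_gradient_left]
  exact hf.fderiv_sub_le ha hz hfa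

theorem gradient_const_mul (c : ℝ) (f : E → ℝ) (x : E) :
    ∇ (fun y => c * f y) x = c • ∇ f x := by
  change ∇ (c • f) x = c • ∇ f x
  simp only [gradient, fderiv_const_smul_field, Pi.smul_apply, map_smul]

theorem gradient_fun_sum {ι : Type*} {t : Finset ι} {f : ι → E → ℝ} {x : E}
    (hf : ∀ j ∈ t, DifferentiableAt ℝ (f j) x) :
    ∇ (fun y => ∑ j ∈ t, f j y) x = ∑ j ∈ t, ∇ (f j) x := by
  simp only [gradient, fderiv_fun_sum hf, map_sum]

theorem ConvexOn.mul_norm_gradient_le {s : Set E} {f : E → ℝ} {y u : E} {ρ M : ℝ}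
    (hf : ConvexOn ℝ s f) (hρ : 0 ≤ ρ) (hball : closedBall y ρ ⊆ s)
    (hM : ∀ z ∈ closedBall y ρ, f z ≤ M) (hu : u ∈ s) (hfu : DifferentiableAt ℝ f u)
    (hfy : DifferentiableAt ℝ f y) :
    ρ * ‖∇ f u‖ ≤ M - f y + ⟪∇ f u - ∇ f y, u - y⟫_ℝ := by
  set g := ∇ f u
  set z := y + (ρ * ‖g‖⁻¹) • g
  have hz : z ∈ closedBall y ρ := by
    rw [mem_closedBall, dist_eq_norm, add_sub_cancel_left, norm_smul, Real.norm_eq_abs,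
      abs_mul, abs_of_nonneg hρ, abs_inv, abs_norm, mul_assoc]
    exact mul_le_of_le_one_right hρ (inv_mul_le_one_of_le₀ le_rfl (norm_nonneg g))
  have hgz : ⟪g, z - u⟫_ℝ = ρ * ‖g‖ - ⟪g, u - y⟫_ℝ := by
    have : z - u = (ρ * ‖g‖⁻¹) • g - (u - y) := by simp only [z]; abel
    rw [this, inner_sub_right, real_inner_smul_right, real_inner_self_eq_norm_sq]
    rcases eq_or_ne ‖g‖ 0 with h | h
    · simp [h]
    · field_simp
  have hy : y ∈ s := hball (mem_closedBall_self hρ)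
  have h₁ := hf.inner_gradient_sub_le hu (hball hz) hfu
  have h₂ := hf.inner_gradient_sub_le hy hu hfy
  rw [inner_sub_left]
  linarith [hM z hz]

theorem mul_norm_gradient_le_of_convexOn_sum {ι : Type*} [Fintype ι] {s : Set E}
    {f : ι → E → ℝ} {y u : E} {ρ : ℝ} {M : ι → ℝ} (hconv : ∀ j, ConvexOn ℝ s (f j))
    (hρ : 0 ≤ ρ) (hball : closedBall y ρ ⊆ s) (hM : ∀ j, ∀ z ∈ closedBall y ρ, f j z ≤ M j)
    (hu : u ∈ s) (hfu : ∀ j, DifferentiableAt ℝ (f j) u) (hfy : ∀ j, DifferentiableAt ℝ (f j) y)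
    (j₀ : ι) :
    ρ * ‖∇ (f j₀) u‖ ≤ ∑ j, (M j - f j y) +
      ‖∇ (fun x => ∑ j, f j x) u - ∇ (fun x => ∑ j, f j x) y‖ * ‖u - y‖ := by
  calc ρ * ‖∇ (f j₀) u‖
      ≤ ∑ j, ρ * ‖∇ (f j) u‖ :=
        Finset.single_le_sum (f := fun j => ρ * ‖∇ (f j) u‖) (fun j _ => by positivity)
          (Finset.mem_univ j₀)
    _ ≤ ∑ j, (M j - f j y + ⟪∇ (f j) u - ∇ (f j) y, u - y⟫_ℝ) := by
        gcongr with j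
        exact (hconv j).mul_norm_gradient_le hρ hball (hM j) hu (hfu j) (hfy j)
    _ = ∑ j, (M j - f j y) +
          ⟪∇ (fun x => ∑ j, f j x) u - ∇ (fun x => ∑ j, f j x) y, u - y⟫_ℝ := by
        rw [Finset.sum_add_distrib, gradient_fun_sum fun j _ => hfu j,
          gradient_fun_sum fun j _ => hfy j, ← Finset.sum_sub_distrib, sum_inner]
    _ ≤ _ := by grw [real_inner_le_norm]

theorem tendsto_norm_gradient_sum_atTop [FiniteDimensional ℝ E] {ι α : Type*} [Fintype ι]
    {s : Set E} {f : ι → E → ℝ} (hconv : ∀ j, ConvexOn ℝ s (f j))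
    (hdiff : ∀ j, ∀ x ∈ interior s, DifferentiableAt ℝ (f j) x) (hs : (interior s).Nonempty)
    {l : Filter α} {u : α → E} {x : E} (hu : ∀ i, u i ∈ interior s)
    (hlim : Tendsto u l (𝓝 x)) (j₀ : ι) (hj₀ : Tendsto (fun i => ‖∇ (f j₀) (u i)‖) l atTop) :
    Tendsto (fun i => ‖∇ (fun y => ∑ j, f j y) (u i)‖) l atTop := by
  set F : E → ℝ := fun y => ∑ j, f j y
  obtain ⟨y, hy⟩ := hs
  obtain ⟨ρ, hρ, hball⟩ := nhds_basis_closedBall.mem_iff.1 (isOpen_interior.mem_nhds hy)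
  choose M hM using fun j => ((isCompact_closedBall y ρ).bddAbove_image
    ((hconv j).continuousOn_interior.mono hball))
  set C := ∑ j, (M j - f j y)
  set R := ‖x - y‖ + 1
  have hR : ∀ᶠ i in l, ‖u i - y‖ ≤ R :=
    (hlim.sub_const y).norm.eventually (eventually_le_nhds (lt_add_one _))
  refine tendsto_atTop_mono' l ?_ <| tendsto_atTop_add_const_right l (-‖∇ F y‖) <|
    (tendsto_atTop_add_const_right l (-C) (hj₀.const_mul_atTop hρ)).atTop_div_const
      (by positivity : 0 < R)
  filter_upwards [hR] with i hi
  simp only [← sub_eq_add_neg]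
  have key := mul_norm_gradient_le_of_convexOn_sum hconv hρ.le (hball.trans interior_subset)
    (fun j z hz => hM j ⟨z, hz, rfl⟩) (interior_subset (hu i)) (fun j => hdiff j _ (hu i))
    (fun j => hdiff j _ hy) j₀
  have : (ρ * ‖∇ (f j₀) (u i)‖ - C) / R ≤ ‖∇ F (u i) - ∇ F y‖ := by
    rw [div_le_iff₀ (by positivity)]
    grw [← hi]
    linarith
  linarith [norm_sub_le (∇ F (u i)) (∇ F y)]

end InnerProductSpace

/-- If `f 1, ..., f n` are convex functions on `ℝ^d` with common domain of finiteness `Θ`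
having nonempty interior, each differentiable on `interior Θ` and each steep, then the
average `(1/n) ∑ j, f j` is steep. -/
theorem steep_average {d n : ℕ} (hn : 0 < n) (Θ : Set (EuclideanSpace ℝ (Fin d)))
    (hΘ : (interior Θ).Nonempty) (f : Fin n → EuclideanSpace ℝ (Fin d) → ℝ)
    (hconv : ∀ j, ConvexOn ℝ Θ (f j))
    (hdiff : ∀ j, ∀ x ∈ interior Θ, DifferentiableAt ℝ (f j) x)
    (hsteep : ∀ j, Steep Θ (f j)) :
    Steep Θ (fun x => (1 / n : ℝ) * ∑ j, f j x) := by
  intro x hx u hu hlim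
  have hsum := tendsto_norm_gradient_sum_atTop hconv hdiff hΘ hu hlim ⟨0, hn⟩
    (hsteep ⟨0, hn⟩ x hx u hu hlim)
  simp only [gradient_const_mul, norm_smul, Real.norm_eq_abs]
  exact hsum.const_mul_atTop (by positivity)
end

section
/- With the assumptions of the previous context (each $\kappa_j$ strictly convex, steep, lower semi-continuous, common domain $\Theta$ with nonempty interior, common support $\mathcal{S}_X$), for every $n \geq 1$ the interior of the domain of the convex conjugate $(\bar\kappa_n)^*$ equals the interior of $C_X = \mathrm{cl}(\mathrm{conv}(\mathcal{S}_X))$: $\mathrm{int}(\mathrm{dom}((\bar\kappa_n)^*)) = \mathrm{int}(C_X)$. -/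
open MeasureTheory Filter Topology
open scoped RealInnerProductSpace

section Average

lemma one_div_mul_sum_range_le {n : ℕ} (hn : 0 < n) {y : ℕ → ℝ} {b : ℝ}
    (h : ∀ j ∈ Finset.range n, y j ≤ b) : (1 / n : ℝ) * ∑ j ∈ Finset.range n, y j ≤ b := by
  have hsum := Finset.sum_le_card_nsmul _ _ _ h
  rw [Finset.card_range, nsmul_eq_mul] at hsum
  rw [one_div_mul_eq_div, div_le_iff₀ (by positivity)]
  linarith

lemma le_one_div_mul_sum_range {n : ℕ} (hn : 0 < n) {y : ℕ → ℝ} {b : ℝ}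
    (h : ∀ j ∈ Finset.range n, b ≤ y j) : b ≤ (1 / n : ℝ) * ∑ j ∈ Finset.range n, y j := by
  have hsum := Finset.card_nsmul_le_sum _ _ _ h
  rw [Finset.card_range, nsmul_eq_mul] at hsum
  rw [one_div_mul_eq_div, le_div_iff₀ (by positivity)]
  linarith

end Average

section Support

variable {α Ω : Type*} [TopologicalSpace α] [MeasurableSpace α] [MeasurableSpace Ω]

lemma setOf_forall_isOpen_measure_ne_zero_eq_support (μ : Measure α) :
    {x | ∀ U : Set α, IsOpen U → x ∈ U → μ U ≠ 0} = μ.support := by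
  ext x
  simp only [Measure.support_eq_forall_isOpen, Set.mem_ofPred_eq, pos_iff_ne_zero]
  exact forall_congr' fun U => forall_comm

lemma ae_mem_support_map [HereditarilyLindelofSpace α] {P : Measure Ω} {X : Ω → α}
    (hX : AEMeasurable X P) : ∀ᵐ ω ∂P, X ω ∈ (P.map X).support :=
  ae_of_ae_map hX Measure.support_mem_ae

lemma measure_preimage_ball_pos {β : Type*} [PseudoMetricSpace β] [MeasurableSpace β]
    [OpensMeasurableSpace β] {P : Measure Ω} {X : Ω → β} (hX : Measurable X) {x : β}
    (hx : x ∈ (P.map X).support) {δ : ℝ} (hδ : 0 < δ) : 0 < P (X ⁻¹' Metric.ball x δ) := by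
  rw [← Measure.map_apply hX measurableSet_ball]
  exact (Measure.mem_support_iff_forall x).1 hx _ (Metric.ball_mem_nhds x hδ)

end Support

section ExpMoment

variable {Ω : Type*} [MeasurableSpace Ω] {P : Measure Ω} {f : Ω → ℝ}

lemma integrable_exp_of_ae_le [IsFiniteMeasure P] (hf : AEMeasurable f P) {c : ℝ}
    (hc : ∀ᵐ ω ∂P, f ω ≤ c) : Integrable (fun ω => Real.exp (f ω)) P := by
  refine (integrable_const (Real.exp c)).mono' (by fun_prop) ?_
  filter_upwards [hc] with ω hω
  rw [Real.norm_of_nonneg (Real.exp_nonneg _)]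
  exact Real.exp_le_exp.2 hω

lemma log_integral_exp_le_of_ae_le [IsProbabilityMeasure P] (hf : AEMeasurable f P) {c : ℝ}
    (hc : ∀ᵐ ω ∂P, f ω ≤ c) : Real.log (∫ ω, Real.exp (f ω) ∂P) ≤ c := by
  have hint := integrable_exp_of_ae_le hf hc
  have hle : ∫ ω, Real.exp (f ω) ∂P ≤ Real.exp c := by
    simpa using integral_mono_ae hint (integrable_const _) (hc.mono fun ω => Real.exp_le_exp.2)
  simpa using Real.log_le_log (integral_exp_pos hint) hle

lemma add_log_measureReal_le_log_integral_exp [IsFiniteMeasure P]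
    (hint : Integrable (fun ω => Real.exp (f ω)) P) {s : Set Ω} (hs : MeasurableSet s)
    (hPs : 0 < P s) {c : ℝ} (hc : ∀ ω ∈ s, c ≤ f ω) :
    c + Real.log (P.real s) ≤ Real.log (∫ ω, Real.exp (f ω) ∂P) := by
  have hPs' : 0 < P.real s := ENNReal.toReal_pos hPs.ne' (measure_ne_top P s)
  have hle : Real.exp c * P.real s ≤ ∫ ω, Real.exp (f ω) ∂P :=
    (setIntegral_ge_of_const_le_real hs (measure_ne_top P s)
      (fun ω hω => Real.exp_le_exp.2 (hc ω hω)) hint.integrableOn).trans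
      (setIntegral_le_integral hint (Eventually.of_forall fun ω => (Real.exp_pos _).le))
  calc c + Real.log (P.real s) = Real.log (Real.exp c * P.real s) := by
        rw [Real.log_mul (Real.exp_pos c).ne' hPs'.ne', Real.log_exp]
    _ ≤ _ := Real.log_le_log (by positivity) hle

end ExpMoment

section Geometry

variable {E : Type*} [NormedAddCommGroup E] [InnerProductSpace ℝ E]

lemma exists_inner_le_lt_inner_of_notMem_closure_convexHull [CompleteSpace E] {S : Set E}
    {a : E} (ha : a ∉ closure (convexHull ℝ S)) :
    ∃ (u : E) (c : ℝ), (∀ x ∈ S, ⟪u, x⟫ ≤ c) ∧ c < ⟪u, a⟫ := by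
  obtain ⟨f, c, hf, hfa⟩ :=
    geometric_hahn_banach_closed_point (convex_convexHull ℝ S).closure isClosed_closure ha
  refine ⟨(InnerProductSpace.toDual ℝ E).symm f, c, fun x hx => ?_, ?_⟩ <;>
    rw [InnerProductSpace.toDual_symm_apply]
  · exact (hf x (subset_closure (subset_convexHull ℝ S hx))).le
  · exact hfa

lemma exists_mem_lt_inner_sub_of_ball_subset {S : Set E} {a : E} {ε : ℝ} (hε : 0 < ε)
    (hball : Metric.ball a ε ⊆ closure (convexHull ℝ S)) {u : E} (hu : ‖u‖ = 1) :
    ∃ x ∈ S, ε / 2 < ⟪u, x - a⟫ := by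
  by_contra! hS
  have hhalf : closure (convexHull ℝ S) ⊆ {z | ⟪u, z⟫ ≤ ε / 2 + ⟪u, a⟫} := by
    refine closure_minimal (convexHull_min (fun x hx => ?_) ?_) ?_
    · have := hS x hx
      rw [inner_sub_right] at this
      exact (by linarith : ⟪u, x⟫ ≤ ε / 2 + ⟪u, a⟫)
    · exact convex_halfSpace_le (innerₛₗ ℝ u).isLinear _
    · exact isClosed_le (by fun_prop) continuous_const
  have hmem : a + (3 * ε / 4) • u ∈ Metric.ball a ε := by
    rw [Metric.mem_ball, dist_eq_norm, add_sub_cancel_left, norm_smul, hu, mul_one,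
      Real.norm_of_nonneg (by positivity)]
    linarith
  have := hhalf (hball hmem)
  rw [Set.mem_ofPred_eq, inner_add_right, real_inner_smul_right, real_inner_self_eq_norm_sq,
    hu] at this
  linarith

lemma exists_finite_forall_mul_norm_le_inner_sub [FiniteDimensional ℝ E] {S : Set E} {a : E}
    (ha : a ∈ interior (closure (convexHull ℝ S))) :
    ∃ T ⊆ S, T.Finite ∧ ∃ δ > 0, ∀ θ : E, ∃ x ∈ T, δ * ‖θ‖ ≤ ⟪θ, x - a⟫ := by
  obtain ⟨ε, hε, hball⟩ := Metric.mem_nhds_iff.1 (mem_interior_iff_mem_nhds.1 ha)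
  obtain ⟨x₀, hx₀⟩ : S.Nonempty :=
    convexHull_nonempty_iff.1 (closure_nonempty_iff.1 ⟨a, interior_subset ha⟩)
  have hcover : Metric.sphere (0 : E) 1 ⊆ ⋃ x ∈ S, {u | ε / 2 < ⟪u, x - a⟫} := fun u hu => by
    simpa using exists_mem_lt_inner_sub_of_ball_subset hε hball (mem_sphere_zero_iff_norm.1 hu)
  obtain ⟨T, hTS, hTfin, hT⟩ := (isCompact_sphere (0 : E) 1).elim_finite_subcover_image
    (fun x _ => isOpen_lt continuous_const (by fun_prop)) hcover
  refine ⟨insert x₀ T, Set.insert_subset hx₀ hTS, hTfin.insert x₀, ε / 2, by positivity,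
    fun θ => ?_⟩
  rcases eq_or_ne θ 0 with rfl | hθ
  · exact ⟨x₀, Set.mem_insert x₀ T, by simp⟩
  have hθn : 0 < ‖θ‖ := norm_pos_iff.2 hθ
  have hu : ‖θ‖⁻¹ • θ ∈ Metric.sphere (0 : E) 1 := by
    rw [mem_sphere_zero_iff_norm, norm_smul, norm_inv, norm_norm, inv_mul_cancel₀ hθn.ne']
  obtain ⟨x, hxT, hx⟩ := Set.mem_iUnion₂.1 (hT hu)
  refine ⟨x, Set.mem_insert_of_mem x₀ hxT, ?_⟩
  rw [Set.mem_ofPred_eq, real_inner_smul_left, lt_inv_mul_iff₀ hθn] at hx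
  linarith

lemma inner_le_inner_of_mem_ball {θ x a y : E} {δ : ℝ} (hx : δ * ‖θ‖ ≤ ⟪θ, x - a⟫)
    (hy : y ∈ Metric.ball x δ) : ⟪θ, a⟫ ≤ ⟪θ, y⟫ := by
  have hyx : ⟪θ, x - y⟫ ≤ δ * ‖θ‖ := by
    rw [Metric.mem_ball, dist_eq_norm, ← norm_neg, neg_sub] at hy
    calc ⟪θ, x - y⟫ ≤ ‖θ‖ * ‖x - y‖ := real_inner_le_norm _ _
      _ ≤ δ * ‖θ‖ := by rw [mul_comm]; gcongr
  have : ⟪θ, x - a⟫ = ⟪θ, x - y⟫ + (⟪θ, y⟫ - ⟪θ, a⟫) := by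
    simp only [inner_sub_right]; ring
  linarith

end Geometry

section Conjugate

variable {E : Type*} [NormedAddCommGroup E] [InnerProductSpace ℝ E]

lemma iSup_inner_sub_eq_top_of_le_mul {Θ : Set E} {g : E → ℝ} {u a : E} {c : ℝ}
    (hc : c < ⟪u, a⟫) (hg : ∀ t : ℝ, 0 ≤ t → t • u ∈ Θ ∧ g (t • u) ≤ t * c) :
    ⨆ θ ∈ Θ, ((⟪θ, a⟫ - g θ : ℝ) : EReal) = ⊤ := by
  refine (EReal.eq_top_iff_forall_lt _).2 fun M => ?_
  set t := (|M| + 1) / (⟪u, a⟫ - c)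
  have ht : 0 ≤ t := div_nonneg (by positivity) (by linarith)
  have hgrowth : t * (⟪u, a⟫ - c) = |M| + 1 := div_mul_cancel₀ _ (by linarith)
  have hM : M < ⟪t • u, a⟫ - g (t • u) := by
    rw [real_inner_smul_left]
    linarith [(hg t ht).2, le_abs_self M]
  exact (EReal.coe_lt_coe_iff.2 hM).trans_le (le_iSup₂ (f := fun θ (_ : θ ∈ Θ) =>
    ((⟪θ, a⟫ - g θ : ℝ) : EReal)) (t • u) (hg t ht).1)

lemma mem_closure_convexHull_of_iSup_inner_sub_lt_top [CompleteSpace E] {S Θ : Set E}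
    {g : E → ℝ} {a : E}
    (hg : ∀ u c, (∀ x ∈ S, ⟪u, x⟫ ≤ c) → ∀ t : ℝ, 0 ≤ t → t • u ∈ Θ ∧ g (t • u) ≤ t * c)
    (ha : ⨆ θ ∈ Θ, ((⟪θ, a⟫ - g θ : ℝ) : EReal) < ⊤) : a ∈ closure (convexHull ℝ S) := by
  by_contra h
  obtain ⟨u, c, hS, hc⟩ := exists_inner_le_lt_inner_of_notMem_closure_convexHull h
  exact ha.ne (iSup_inner_sub_eq_top_of_le_mul hc (hg u c hS))

end Conjugate

section LogMGF

variable {E Ω : Type*} [NormedAddCommGroup E] [InnerProductSpace ℝ E] [MeasurableSpace E]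
  [BorelSpace E] [MeasurableSpace Ω] {P : Measure Ω}

lemma integrable_exp_inner_smul_and_log_integral_le [IsProbabilityMeasure P] {X : Ω → E}
    (hX : AEMeasurable X P) {S : Set E} (hXS : ∀ᵐ ω ∂P, X ω ∈ S) {u : E} {c : ℝ}
    (hu : ∀ x ∈ S, ⟪u, x⟫ ≤ c) {t : ℝ} (ht : 0 ≤ t) :
    Integrable (fun ω => Real.exp ⟪t • u, X ω⟫) P ∧
      Real.log (∫ ω, Real.exp ⟪t • u, X ω⟫ ∂P) ≤ t * c := by
  have hbound : ∀ᵐ ω ∂P, ⟪t • u, X ω⟫ ≤ t * c := hXS.mono fun ω hω => by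
    rw [real_inner_smul_left]
    exact mul_le_mul_of_nonneg_left (hu _ hω) ht
  have hmeas : AEMeasurable (fun ω => ⟪t • u, X ω⟫) P := by fun_prop
  exact ⟨integrable_exp_of_ae_le hmeas hbound, log_integral_exp_le_of_ae_le hmeas hbound⟩

end LogMGF

section Domain

variable {E Ω : Type*} [NormedAddCommGroup E] [InnerProductSpace ℝ E] [MeasurableSpace E]
  [BorelSpace E] [MeasurableSpace Ω] {P : Measure Ω} {X : ℕ → Ω → E} {Θ S : Set E}
  {κ : ℕ → E → ℝ} {n : ℕ} {a : E}

lemma mem_closure_convexHull_of_iSup_inner_sub_avg_lt_top [CompleteSpace E]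
    [IsProbabilityMeasure P] (hX : ∀ j, AEMeasurable (X j) P)
    (hΘ : ∀ θ, (∀ j, Integrable (fun ω => Real.exp ⟪θ, X j ω⟫) P) → θ ∈ Θ)
    (hXS : ∀ j, ∀ᵐ ω ∂P, X j ω ∈ S)
    (hκ : ∀ j θ, κ j θ = Real.log (∫ ω, Real.exp ⟪θ, X j ω⟫ ∂P)) (hn : 0 < n)
    (ha : ⨆ θ ∈ Θ, ((⟪θ, a⟫ - (1 / n : ℝ) * ∑ j ∈ Finset.range n, κ j θ : ℝ) : EReal) < ⊤) :
    a ∈ closure (convexHull ℝ S) := by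
  refine mem_closure_convexHull_of_iSup_inner_sub_lt_top (fun u c hu t ht => ⟨?_, ?_⟩) ha
  · exact hΘ _ fun j => (integrable_exp_inner_smul_and_log_integral_le (hX j) (hXS j) hu ht).1
  · refine one_div_mul_sum_range_le hn fun j _ => ?_
    rw [hκ]
    exact (integrable_exp_inner_smul_and_log_integral_le (hX j) (hXS j) hu ht).2

lemma iSup_inner_sub_avg_lt_top_of_mem_interior [FiniteDimensional ℝ E] [IsFiniteMeasure P]
    (hX : ∀ j, Measurable (X j))
    (hΘ : ∀ j, ∀ θ ∈ Θ, Integrable (fun ω => Real.exp ⟪θ, X j ω⟫) P)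
    (hS : ∀ j, S ⊆ (P.map (X j)).support)
    (hκ : ∀ j θ, κ j θ = Real.log (∫ ω, Real.exp ⟪θ, X j ω⟫ ∂P)) (hn : 0 < n)
    (ha : a ∈ interior (closure (convexHull ℝ S))) :
    ⨆ θ ∈ Θ, ((⟪θ, a⟫ - (1 / n : ℝ) * ∑ j ∈ Finset.range n, κ j θ : ℝ) : EReal) < ⊤ := by
  obtain ⟨T, hTS, hTfin, δ, hδ, hT⟩ := exists_finite_forall_mul_norm_le_inner_sub ha
  obtain ⟨M, hM⟩ := ((hTfin.prod (Set.finite_Iio n)).image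
    fun p : E × ℕ => -Real.log (P.real (X p.2 ⁻¹' Metric.ball p.1 δ))).bddAbove
  have hbound : ∀ θ ∈ Θ, ∀ j ∈ Finset.range n, ⟪θ, a⟫ - M ≤ κ j θ := by
    intro θ hθ j hj
    obtain ⟨x, hxT, hx⟩ := hT θ
    have hlog := add_log_measureReal_le_log_integral_exp (hΘ j θ hθ) (hX j measurableSet_ball)
      (measure_preimage_ball_pos (hX j) (hS j (hTS hxT)) hδ)
      fun ω hω => inner_le_inner_of_mem_ball hx hω
    have hMx := hM ⟨(x, j), ⟨hxT, Finset.mem_range.1 hj⟩, rfl⟩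
    rw [hκ]
    linarith
  refine (iSup₂_le fun θ hθ => ?_).trans_lt (EReal.coe_lt_top M)
  exact EReal.coe_le_coe_iff.2 (by linarith [le_one_div_mul_sum_range hn (hbound θ hθ)])

end Domain

theorem interior_dom_conjugate_eq_general {d : ℕ} {Ω : Type*} [MeasurableSpace Ω]
    (P : Measure Ω) [IsProbabilityMeasure P]
    (X : ℕ → Ω → EuclideanSpace ℝ (Fin d)) (hmeas : ∀ j, Measurable (X j))
    (Θ : Set (EuclideanSpace ℝ (Fin d)))
    (hΘ : ∀ j, Θ = {θ : EuclideanSpace ℝ (Fin d) |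
      Integrable (fun ω => Real.exp ⟪θ, X j ω⟫) P})
    (SX : Set (EuclideanSpace ℝ (Fin d)))
    (hsupp : ∀ j, SX = {x | ∀ U : Set (EuclideanSpace ℝ (Fin d)),
      IsOpen U → x ∈ U → Measure.map (X j) P U ≠ 0})
    (κ : ℕ → EuclideanSpace ℝ (Fin d) → ℝ)
    (hκ : ∀ j θ, κ j θ = Real.log (∫ ω, Real.exp ⟪θ, X j ω⟫ ∂P)) :
    ∀ n : ℕ, 0 < n →
      interior {a : EuclideanSpace ℝ (Fin d) |
          (⨆ θ ∈ Θ, ((⟪θ, a⟫ - (1 / n : ℝ) * ∑ j ∈ Finset.range n, κ j θ : ℝ) : EReal))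
            < (⊤ : EReal)} =
        interior (closure (convexHull ℝ SX)) := by
  intro n hn
  have hsupp' : ∀ j, SX = (P.map (X j)).support := fun j =>
    (hsupp j).trans (setOf_forall_isOpen_measure_ne_zero_eq_support _)
  apply subset_antisymm
  · refine interior_mono fun a ha => mem_closure_convexHull_of_iSup_inner_sub_avg_lt_top
      (fun j => (hmeas j).aemeasurable) (fun θ hθ => ?_) (fun j => ?_) hκ hn ha
    · rw [hΘ 0]
      exact hθ 0
    · rw [hsupp' j]
      exact ae_mem_support_map (hmeas j).aemeasurable
  · refine interior_maximal (fun a ha => iSup_inner_sub_avg_lt_top_of_mem_interior hmeas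
      (fun j θ hθ => ?_) (fun j => (hsupp' j).subset) hκ hn ha) isOpen_interior
    rw [hΘ j] at hθ
    exact hθ

/-- Under the assumptions on the log-mgfs `κ j` (strictly convex, steep, lower
semicontinuous on the common domain `Θ` of nonempty interior, common support `S_X`):
for every `n ≥ 1`, the interior of the domain of the convex conjugate `(κ̄_n)*` equals the
interior of `C_X = cl(conv S_X)`. -/
theorem interior_dom_conjugate_eq {d : ℕ} {Ω : Type*} [MeasurableSpace Ω]
    (P : Measure Ω) [IsProbabilityMeasure P]
    (X : ℕ → Ω → EuclideanSpace ℝ (Fin d)) (hmeas : ∀ j, Measurable (X j))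
    (Θ : Set (EuclideanSpace ℝ (Fin d)))
    (hΘ : ∀ j, Θ = {θ : EuclideanSpace ℝ (Fin d) |
      Integrable (fun ω => Real.exp ⟪θ, X j ω⟫) P})
    (hΘint : (interior Θ).Nonempty)
    (SX : Set (EuclideanSpace ℝ (Fin d)))
    (hsupp : ∀ j, SX = {x | ∀ U : Set (EuclideanSpace ℝ (Fin d)),
      IsOpen U → x ∈ U → Measure.map (X j) P U ≠ 0})
    (κ : ℕ → EuclideanSpace ℝ (Fin d) → ℝ)
    (hκ : ∀ j θ, κ j θ = Real.log (∫ ω, Real.exp ⟪θ, X j ω⟫ ∂P))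
    (hconv : ∀ j, StrictConvexOn ℝ Θ (κ j)) (hsteep : ∀ j, Steep Θ (κ j))
    (hlsc : ∀ j, LowerSemicontinuousOn (κ j) Θ) :
    ∀ n : ℕ, 0 < n →
      interior {a : EuclideanSpace ℝ (Fin d) |
          (⨆ θ ∈ Θ, ((⟪θ, a⟫ - (1 / n : ℝ) * ∑ j ∈ Finset.range n, κ j θ : ℝ) : EReal))
            < (⊤ : EReal)} =
        interior (closure (convexHull ℝ SX)) :=
  interior_dom_conjugate_eq_general P X hmeas Θ hΘ SX hsupp κ hκ
end
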